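/- Let n, d ≥ 2 be integers, let L be an SU matrix indexed by [n]×[d], and let k = Σ_{i∈[n]} L_{i,1}. If H_1, H_2 ⊆ grid are distinct L-perfect sets, then |H_1 ∩ H_2| ≤ k − 2. -/
import Mathlib


/-- `L` is a simple-uniform (SU) matrix indexed by `[n] × [d]`. -/
def IsSU (n d : ℕ) (L : Fin n → Fin d → ℕ) : Prop :=
  (∀ i j, L i j ≤ n) ∧
  (∀ j : Fin d, 2 ≤ ∑ i, L i j ∧ ∑ i, L i j ≤ n ^ d - 1) ∧
  (∀ j1 j2 : Fin d, ∑ i, L i j1 = ∑ i, L i j2)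

/-- `S ⊆ grid = [n]^d` is `L`-perfect. -/
def IsPerfect {n d : ℕ} (L : Fin n → Fin d → ℕ) (S : Finset (Fin d → Fin n)) : Prop :=
  ∀ (i : Fin n) (j : Fin d), (S.filter fun e => e j = i).card = L i j

/-- The bases of `(n, d, L, G)`, where `k = Σ_i L_{i,1}`. -/
def basesX {n d : ℕ} (L : Fin n → Fin d → ℕ) (k : ℕ)
    (G : Set (Finset (Fin d → Fin n))) : Set (Finset (Fin d → Fin n)) :=
  {S | S.card = k ∧ (¬ IsPerfect L S ∨ S ∈ G)}

/-- The `(L,j)`-partition independence system. -/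
def ILj {n d : ℕ} (L : Fin n → Fin d → ℕ) (j : Fin d) : Set (Finset (Fin d → Fin n)) :=
  {S | ∀ i : Fin n, (S.filter fun e => e j = i).card ≤ L i j}

/-- `I(B)`: all subsets of members of `B`. -/
def IofB {β : Type*} (B : Set (Finset β)) : Set (Finset β) :=
  {S | ∃ T ∈ B, S ⊆ T}

/-- `S ∈ bases(I)`: `S` is a member of `I` of maximum cardinality. -/
def IsBasisOf {β : Type*} (I : Set (Finset β)) (S : Finset β) : Prop :=
  S ∈ I ∧ ∀ T ∈ I, T.card ≤ S.card


lemma card_perfect {n d : ℕ} {L : Fin n → Fin d → ℕ} {S : Finset (Fin d → Fin n)}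
    (hS : IsPerfect L S) (j : Fin d) : S.card = ∑ i, L i j := by
  rw [Finset.card_eq_sum_card_fiberwise (f := fun e => e j) (t := Finset.univ)
    (fun x _ => Finset.mem_univ _)]
  exact Finset.sum_congr rfl fun i _ => hS i j

lemma decomp {n d : ℕ} {L : Fin n → Fin d → ℕ} {S : Finset (Fin d → Fin n)}
    (hS : IsPerfect L S) {T : Finset (Fin d → Fin n)} {x : Fin d → Fin n}
    (hx : S \ T = {x}) (i : Fin n) (j : Fin d) :
    L i j = ((S ∩ T).filter fun e => e j = i).card + (if x j = i then 1 else 0) := by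
  have h1 : (S ∩ T) ∪ (S \ T) = S := by ext a; simp; tauto
  have hd : Disjoint (S ∩ T) (S \ T) := Finset.disjoint_sdiff.mono_left Finset.inter_subset_right
  calc L i j = (S.filter fun e => e j = i).card := (hS i j).symm
    _ = (((S ∩ T) ∪ (S \ T)).filter fun e => e j = i).card := by rw [h1]
    _ = ((S ∩ T).filter fun e => e j = i).card + ((S \ T).filter fun e => e j = i).card := by
        rw [Finset.filter_union, Finset.card_union_of_disjoint
          (hd.mono (Finset.filter_subset _ _) (Finset.filter_subset _ _))]
    _ = ((S ∩ T).filter fun e => e j = i).card + (if x j = i then 1 else 0) := by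
        rw [hx, Finset.filter_singleton]; split <;> simp

/-- Claim 3.4: two distinct `L`-perfect sets intersect in at most
`k - 2` elements, where `k = Σ_i L_{i,1}`. -/
theorem stmt3 (n d : ℕ) (hn : 2 ≤ n) (hd : 2 ≤ d)
    (L : Fin n → Fin d → ℕ) (hL : IsSU n d L)
    (H1 H2 : Finset (Fin d → Fin n)) (hH1 : IsPerfect L H1) (hH2 : IsPerfect L H2)
    (hne : H1 ≠ H2) :
    (H1 ∩ H2).card ≤ (∑ i, L i (⟨0, by omega⟩ : Fin d)) - 2 := by
  obtain ⟨-, hL2, -⟩ := hL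
  set j0 : Fin d := ⟨0, by omega⟩
  set k := ∑ i, L i j0 with hk
  have hk2 : 2 ≤ k := (hL2 j0).1
  have hc1 : H1.card = k := card_perfect hH1 j0
  have hc2 : H2.card = k := card_perfect hH2 j0
  by_contra hcon
  push_neg at hcon
  have hle : (H1 ∩ H2).card ≤ k := hc1 ▸ Finset.card_le_card Finset.inter_subset_left
  rcases eq_or_lt_of_le hle with heq | hlt
  · exact hne ((Finset.eq_of_subset_of_card_le Finset.inter_subset_left (by omega)).symm.trans
      (Finset.eq_of_subset_of_card_le Finset.inter_subset_right (by omega)))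
  · have hcard : (H1 ∩ H2).card = k - 1 := by omega
    have hx1 : (H1 \ H2).card = 1 := by
      rw [← Finset.sdiff_inter_self_left,
        Finset.card_sdiff_of_subset Finset.inter_subset_left, hc1, hcard]
      omega
    have hy1 : (H2 \ H1).card = 1 := by
      rw [← Finset.sdiff_inter_self_left,
        Finset.card_sdiff_of_subset Finset.inter_subset_left, hc2, Finset.inter_comm, hcard]
      omega
    obtain ⟨x, hx⟩ := Finset.card_eq_one.mp hx1
    obtain ⟨y, hy⟩ := Finset.card_eq_one.mp hy1
    have hxm : x ∈ H1 \ H2 := hx ▸ Finset.mem_singleton_self x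
    have hym : y ∈ H2 \ H1 := hy ▸ Finset.mem_singleton_self y
    simp only [Finset.mem_sdiff] at hxm hym
    have hxy : x ≠ y := fun h => hxm.2 (h ▸ hym.1)
    obtain ⟨j, hj⟩ := Function.ne_iff.mp hxy
    have e1 := decomp hH1 hx (x j) j
    have e2 := decomp hH2 hy (x j) j
    rw [Finset.inter_comm] at e2
    rw [if_pos rfl] at e1
    have hne' : ¬ (y j = x j) := fun h => hj h.symm
    rw [if_neg hne'] at e2
    have := e1.symm.trans e2
    simp at this
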